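/- arXiv:2406.06362 — 3 statements merged into one kernel-verified Lean document; each statement's English description precedes it below -/
import Mathlib

section
/- Let λ₀ > 0 and L ∈ ℕ, and let h : (0, λ₀) → ℝ be (L+1)-times continuously differentiable with max_{ℓ=0,…,L+1} sup_{λ ∈ (0,λ₀)} |h^{(ℓ)}(λ)| < ∞. Then there exists a constant C > 0, independent of λ, such that |h^{(L)}(λ) − λ^{−L} Δ_λ^L h(λ)| ≤ C·λ for all λ ∈ (0, λ₀/(L+1)). -/
open Set Finset

private lemma iterDW_subset {f : ℝ → ℝ} {s t : Set ℝ} {n k : ℕ} {x : ℝ}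
    (hst : s ⊆ t) (hs : UniqueDiffOn ℝ s) (ht : UniqueDiffOn ℝ t)
    (hf : ContDiffOn ℝ n f t) (hk : k ≤ n) (hx : x ∈ s) :
    iteratedDerivWithin k f s x = iteratedDerivWithin k f t x := by
  have H := (hf.ftaylorSeriesWithin ht).mono hst
  have h2 := H.eq_iteratedFDerivWithin_of_uniqueDiffOn (by exact_mod_cast hk) hs hx
  simp only [iteratedDerivWithin_eq_iteratedFDerivWithin]
  rw [← h2]
  rfl

private lemma diff_step (L : ℕ) (g : ℕ → ℝ) :
    ∑ m ∈ range (L + 1 + 1), (-1 : ℝ) ^ m * ((L + 1).choose m : ℝ) * g m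
      = ∑ m ∈ range (L + 1), (-1 : ℝ) ^ m * (L.choose m : ℝ) * (g m - g (m + 1)) := by
  rw [Finset.sum_range_succ' (fun m => (-1 : ℝ) ^ m * ((L + 1).choose m : ℝ) * g m) (L + 1)]
  have h2 : ∀ m ∈ range (L + 1), (-1 : ℝ) ^ (m + 1) * ((L + 1).choose (m + 1) : ℝ) * g (m + 1)
      = -((-1 : ℝ) ^ m * (L.choose m : ℝ) * g (m + 1))
        + (-1 : ℝ) ^ (m + 1) * (L.choose (m + 1) : ℝ) * g (m + 1) := by
    intro m _
    rw [Nat.choose_succ_succ]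
    push_cast
    ring
  rw [Finset.sum_congr rfl h2, Finset.sum_add_distrib]
  have h3 : ∑ m ∈ range (L + 1), (-1 : ℝ) ^ (m + 1) * (L.choose (m + 1) : ℝ) * g (m + 1)
      = (∑ m ∈ range (L + 1), (-1 : ℝ) ^ m * (L.choose m : ℝ) * g m) - g 0 := by
    have h5 := Finset.sum_range_succ' (fun m => (-1 : ℝ) ^ m * (L.choose m : ℝ) * g m) (L + 1)
    have h4 : ∑ m ∈ range (L + 1 + 1), (-1 : ℝ) ^ m * (L.choose m : ℝ) * g m
        = ∑ m ∈ range (L + 1), (-1 : ℝ) ^ m * (L.choose m : ℝ) * g m := by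
      rw [Finset.sum_range_succ]
      simp
    rw [h4] at h5
    simp only [pow_zero, Nat.choose_zero_right, Nat.cast_one, one_mul] at h5
    linarith
  rw [h3]
  simp only [mul_sub]
  rw [Finset.sum_sub_distrib, Finset.sum_neg_distrib]
  simp only [Nat.choose_zero_right, Nat.cast_one, pow_zero, one_mul]
  ring

private lemma key_sum : ∀ L : ℕ, ∀ k : ℕ, k ≤ L →
    ∑ m ∈ range (L + 1), (-1 : ℝ) ^ m * (L.choose m : ℝ) * (m : ℝ) ^ k
      = if k = L then (-1 : ℝ) ^ L * L.factorial else 0 := by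
  intro L
  induction L with
  | zero =>
    intro k hk
    interval_cases k
    simp
  | succ L ih =>
    intro k hk
    have hd := diff_step L (fun m => (m : ℝ) ^ k)
    rw [hd]
    have step2 : ∀ m ∈ range (L + 1),
        (-1 : ℝ) ^ m * (L.choose m : ℝ) * ((fun m : ℕ => (m : ℝ) ^ k) m - (fun m : ℕ => (m : ℝ) ^ k) (m + 1))
          = ∑ j ∈ range k, -((k.choose j : ℝ) * ((-1 : ℝ) ^ m * (L.choose m : ℝ) * (m : ℝ) ^ j)) := by
      intro m _
      simp only
      have hb : ((m : ℝ) + 1) ^ k = ∑ j ∈ range (k + 1), (k.choose j : ℝ) * (m : ℝ) ^ j := by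
        rw [add_pow]
        exact Finset.sum_congr rfl fun j _ => by ring
      have hc : ((m + 1 : ℕ) : ℝ) = (m : ℝ) + 1 := by push_cast; ring
      have expand : ((m : ℕ) : ℝ) ^ k - ((m : ℝ) + 1) ^ k
          = -∑ j ∈ range k, (k.choose j : ℝ) * (m : ℝ) ^ j := by
        rw [hb, Finset.sum_range_succ, Nat.choose_self]
        push_cast; ring
      rw [hc, expand, mul_neg, Finset.mul_sum, ← Finset.sum_neg_distrib]
      exact Finset.sum_congr rfl fun j _ => by ring
    rw [Finset.sum_congr rfl step2, Finset.sum_comm]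
    have step3 : ∀ j ∈ range k,
        ∑ m ∈ range (L + 1), -((k.choose j : ℝ) * ((-1 : ℝ) ^ m * (L.choose m : ℝ) * (m : ℝ) ^ j))
          = -((k.choose j : ℝ) * (if j = L then (-1 : ℝ) ^ L * L.factorial else 0)) := by
      intro j hj
      rw [Finset.sum_neg_distrib, ← Finset.mul_sum,
        ih j (by have := Finset.mem_range.mp hj; omega)]
    rw [Finset.sum_congr rfl step3]
    have step4 : ∀ j ∈ range k,
        -((k.choose j : ℝ) * (if j = L then (-1 : ℝ) ^ L * L.factorial else 0))
          = if j = L then -((k.choose j : ℝ) * ((-1 : ℝ) ^ L * L.factorial)) else 0 := by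
      intro j _
      by_cases hjL : j = L <;> simp [hjL]
    rw [Finset.sum_congr rfl step4, Finset.sum_ite_eq' (range k) L
      (fun j => -((k.choose j : ℝ) * ((-1 : ℝ) ^ L * L.factorial)))]
    by_cases hkL : k = L + 1
    · subst hkL
      simp only [Finset.mem_range, Nat.lt_succ_self, if_true]
      rw [Nat.choose_succ_self_right]
      simp [Nat.factorial_succ, pow_succ]
      ring
    · have hkL' : k ≤ L := by omega
      have : L ∉ range k := by simp [Finset.mem_range]; omega
      simp [this, hkL]

private lemma key_sum' (L k : ℕ) (hk : k ≤ L) :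
    ∑ m ∈ range (L + 1), (L.choose m : ℝ) * (-1 : ℝ) ^ (L - m) * (m : ℝ) ^ k
      = if k = L then (L.factorial : ℝ) else 0 := by
  have hcongr : ∀ m ∈ range (L + 1), (L.choose m : ℝ) * (-1 : ℝ) ^ (L - m) * (m : ℝ) ^ k
      = (-1 : ℝ) ^ L * ((-1 : ℝ) ^ m * (L.choose m : ℝ) * (m : ℝ) ^ k) := by
    intro m hm
    have hm' : m ≤ L := by
      have := Finset.mem_range.mp hm; omega
    have h1 : (-1 : ℝ) ^ (L - m) * ((-1 : ℝ) ^ m * (-1 : ℝ) ^ m) = (-1 : ℝ) ^ L * (-1 : ℝ) ^ m := by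
      rw [← pow_add, ← pow_add, ← pow_add]
      congr 1
      omega
    have h2 : (-1 : ℝ) ^ m * (-1 : ℝ) ^ m = 1 := by
      rw [← pow_add, ← two_mul, pow_mul]
      norm_num
    rw [h2, mul_one] at h1
    rw [h1]
    ring
  rw [Finset.sum_congr rfl hcongr, ← Finset.mul_sum, key_sum L k hk]
  by_cases hkL : k = L
  · subst hkL
    simp [← mul_assoc, ← pow_add, ← two_mul, pow_mul]
  · simp [hkL]
/-- **Lemma (finite-difference approximation of derivatives).**
Let `λ₀ > 0`, `L ∈ ℕ` and let `h ∈ C^{L+1}((0, λ₀))` with all derivatives up to order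
`L+1` bounded on `(0, λ₀)`.  Then there is a constant `C > 0`, independent of `λ`, with
`|h^{(L)}(λ) − λ^{−L} Δ_λ^L h(λ)| ≤ C λ` for all `λ ∈ (0, λ₀/(L+1))`, where
`Δ_λ^L h(λ) = ∑_{m=0}^{L} binom(L,m) (−1)^{L−m} h((m+1)λ)`. -/
theorem finite_difference_approximates_derivative
    (lam0 : ℝ) (hlam0 : 0 < lam0) (L : ℕ) (h : ℝ → ℝ)
    (hreg : ContDiffOn ℝ (L + 1) h (Set.Ioo 0 lam0))
    (hbdd : ∀ ℓ : ℕ, ℓ ≤ L + 1 → ∃ M : ℝ, ∀ lam ∈ Set.Ioo (0 : ℝ) lam0,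
      |iteratedDerivWithin ℓ h (Set.Ioo 0 lam0) lam| ≤ M) :
    ∃ C > 0, ∀ lam ∈ Set.Ioo (0 : ℝ) (lam0 / (L + 1)),
      |iteratedDerivWithin L h (Set.Ioo 0 lam0) lam -
        (lam ^ L)⁻¹ * ∑ m ∈ Finset.range (L + 1),
          (L.choose m : ℝ) * (-1) ^ (L - m) * h ((m + 1) * lam)| ≤ C * lam := by
  classical
  set s : Set ℝ := Set.Ioo (0 : ℝ) lam0 with hsdef
  obtain ⟨M, hM⟩ := hbdd (L + 1) le_rfl
  have hM0 : 0 ≤ M :=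
    le_trans (abs_nonneg _) (hM (lam0 / 2) ⟨by positivity, by linarith⟩)
  set K : ℝ := (∑ m ∈ Finset.range (L + 1), (L.choose m : ℝ) * (m : ℝ) ^ (L + 1)) * M
      / L.factorial with hKdef
  have hK0 : 0 ≤ K := by
    apply div_nonneg _ (by positivity)
    exact mul_nonneg (Finset.sum_nonneg fun m _ => by positivity) hM0
  refine ⟨K + 1, by positivity, ?_⟩
  intro lam hlam
  obtain ⟨hl0, hl1⟩ := hlam
  have hL1pos : (0 : ℝ) < (L : ℝ) + 1 := by positivity
  have hLlam : ((L : ℝ) + 1) * lam < lam0 := by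
    have := (lt_div_iff₀ hL1pos).mp hl1
    linarith
  have hud_s : UniqueDiffOn ℝ s := isOpen_Ioo.uniqueDiffOn
  have hreg' : ContDiffOn ℝ ((L + 1 : ℕ) : ℕ∞) h s := by exact_mod_cast hreg
  set d : ℕ → ℝ := fun k => iteratedDerivWithin k h s lam with hddef
  -- Taylor estimate for each m
  have hTay : ∀ m ∈ Finset.range (L + 1),
      |h (((m : ℝ) + 1) * lam) - ∑ k ∈ Finset.range (L + 1),
          ((k.factorial : ℝ)⁻¹ * ((m : ℝ) * lam) ^ k) * d k|
        ≤ M * ((m : ℝ) * lam) ^ (L + 1) / L.factorial := by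
    intro m hm
    have hmL : m ≤ L := by have := Finset.mem_range.mp hm; omega
    rcases Nat.eq_zero_or_pos m with hm0 | hmpos
    · subst hm0
      have hsum : ∑ k ∈ Finset.range (L + 1),
          (((k.factorial : ℝ))⁻¹ * (((0 : ℕ) : ℝ) * lam) ^ k) * d k = d 0 := by
        rw [Finset.sum_eq_single 0]
        · simp
        · intro k _ hk0
          simp [zero_pow hk0]
        · simp
      rw [hsum]
      have : d 0 = h lam := by
        simp [hddef, iteratedDerivWithin_zero]
      rw [this]
      simp
    · -- m ≥ 1
      set b : ℝ := ((m : ℝ) + 1) * lam with hbdef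
      have hab : lam < b := by
        have : (1 : ℝ) ≤ (m : ℝ) := by exact_mod_cast hmpos
        nlinarith
      have hIcc : Set.Icc lam b ⊆ s := by
        intro x hx
        constructor
        · linarith [hx.1]
        · have hble : b ≤ ((L : ℝ) + 1) * lam := by
            have : (m : ℝ) ≤ (L : ℝ) := by exact_mod_cast hmL
            nlinarith
          linarith [hx.2]
      have hud_I : UniqueDiffOn ℝ (Set.Icc lam b) := uniqueDiffOn_Icc hab
      have hfI : ContDiffOn ℝ ((L : ℕ∞) + 1) h (Set.Icc lam b) := by
        exact_mod_cast hreg'.mono hIcc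
      have hcoef : ∀ k, k ≤ L + 1 →
          iteratedDerivWithin k h (Set.Icc lam b) lam = d k := by
        intro k hk
        exact iterDW_subset hIcc hud_I hud_s hreg' hk (Set.left_mem_Icc.mpr hab.le)
      have hbound : ∀ y ∈ Set.Icc lam b,
          ‖iteratedDerivWithin (L + 1) h (Set.Icc lam b) y‖ ≤ M := by
        intro y hy
        rw [iterDW_subset hIcc hud_I hud_s hreg' le_rfl hy, Real.norm_eq_abs]
        exact hM y (hIcc hy)
      have htb := taylor_mean_remainder_bound hab.le hfI (Set.right_mem_Icc.mpr hab.le) hbound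
      rw [taylor_within_apply] at htb
      have hsum : ∑ k ∈ Finset.range (L + 1),
          (((k.factorial : ℝ))⁻¹ * (b - lam) ^ k) • iteratedDerivWithin k h (Set.Icc lam b) lam
          = ∑ k ∈ Finset.range (L + 1),
            ((k.factorial : ℝ)⁻¹ * ((m : ℝ) * lam) ^ k) * d k := by
        apply Finset.sum_congr rfl
        intro k hk
        rw [smul_eq_mul, hcoef k (by have := Finset.mem_range.mp hk; omega)]
        congr 2
        rw [hbdef]; ring
      rw [hsum] at htb
      have hba : b - lam = (m : ℝ) * lam := by rw [hbdef]; ring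
      rw [hba, Real.norm_eq_abs] at htb
      exact htb
  -- the swap identity
  have hswap : ∑ m ∈ Finset.range (L + 1), (L.choose m : ℝ) * (-1 : ℝ) ^ (L - m) *
      (∑ k ∈ Finset.range (L + 1), ((k.factorial : ℝ)⁻¹ * ((m : ℝ) * lam) ^ k) * d k)
      = lam ^ L * d L := by
    have expand : ∀ m ∈ Finset.range (L + 1),
        (L.choose m : ℝ) * (-1 : ℝ) ^ (L - m) *
          (∑ k ∈ Finset.range (L + 1), ((k.factorial : ℝ)⁻¹ * ((m : ℝ) * lam) ^ k) * d k)
        = ∑ k ∈ Finset.range (L + 1),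
            ((k.factorial : ℝ)⁻¹ * lam ^ k * d k) *
              ((L.choose m : ℝ) * (-1 : ℝ) ^ (L - m) * (m : ℝ) ^ k) := by
      intro m _
      rw [Finset.mul_sum]
      exact Finset.sum_congr rfl fun k _ => by rw [mul_pow]; ring
    rw [Finset.sum_congr rfl expand, Finset.sum_comm]
    have inner : ∀ k ∈ Finset.range (L + 1),
        ∑ m ∈ Finset.range (L + 1), ((k.factorial : ℝ)⁻¹ * lam ^ k * d k) *
            ((L.choose m : ℝ) * (-1 : ℝ) ^ (L - m) * (m : ℝ) ^ k)
        = if k = L then lam ^ L * d L else 0 := by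
      intro k hk
      have hkL : k ≤ L := by have := Finset.mem_range.mp hk; omega
      rw [← Finset.mul_sum, key_sum' L k hkL]
      by_cases hkeq : k = L
      · subst hkeq
        simp only [if_true]
        have : (k.factorial : ℝ) ≠ 0 := by positivity
        field_simp
      · simp [hkeq]
    rw [Finset.sum_congr rfl inner, Finset.sum_ite_eq' (Finset.range (L + 1)) L
      (fun _ => lam ^ L * d L)]
    simp
  -- error bound
  set Δ : ℝ := ∑ m ∈ Finset.range (L + 1),
      (L.choose m : ℝ) * (-1 : ℝ) ^ (L - m) * h (((m : ℝ) + 1) * lam) with hΔdef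
  have hdiff : Δ - lam ^ L * d L = ∑ m ∈ Finset.range (L + 1),
      (L.choose m : ℝ) * (-1 : ℝ) ^ (L - m) *
        (h (((m : ℝ) + 1) * lam) - ∑ k ∈ Finset.range (L + 1),
          ((k.factorial : ℝ)⁻¹ * ((m : ℝ) * lam) ^ k) * d k) := by
    rw [← hswap, hΔdef, ← Finset.sum_sub_distrib]
    exact Finset.sum_congr rfl fun m _ => by ring
  have herr : |Δ - lam ^ L * d L| ≤ K * lam ^ (L + 1) := by
    rw [hdiff]
    calc |∑ m ∈ Finset.range (L + 1), (L.choose m : ℝ) * (-1 : ℝ) ^ (L - m) *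
          (h (((m : ℝ) + 1) * lam) - ∑ k ∈ Finset.range (L + 1),
            ((k.factorial : ℝ)⁻¹ * ((m : ℝ) * lam) ^ k) * d k)|
        ≤ ∑ m ∈ Finset.range (L + 1), |(L.choose m : ℝ) * (-1 : ℝ) ^ (L - m) *
          (h (((m : ℝ) + 1) * lam) - ∑ k ∈ Finset.range (L + 1),
            ((k.factorial : ℝ)⁻¹ * ((m : ℝ) * lam) ^ k) * d k)| :=
          Finset.abs_sum_le_sum_abs _ _
      _ ≤ ∑ m ∈ Finset.range (L + 1), (L.choose m : ℝ) *
            (M * ((m : ℝ) * lam) ^ (L + 1) / L.factorial) := by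
          apply Finset.sum_le_sum
          intro m hm
          rw [abs_mul, abs_mul, abs_pow, abs_neg, abs_one, one_pow, mul_one,
            Nat.abs_cast]
          exact mul_le_mul_of_nonneg_left (hTay m hm) (by positivity)
      _ = K * lam ^ (L + 1) := by
          rw [hKdef, div_eq_mul_inv, Finset.sum_mul, Finset.sum_mul, Finset.sum_mul]
          apply Finset.sum_congr rfl
          intro m _
          rw [mul_pow]
          ring
  -- conclude
  have hlamne : lam ≠ 0 := ne_of_gt hl0
  have hlamLne : lam ^ L ≠ 0 := pow_ne_zero _ hlamne
  have hgoal_eq : d L - (lam ^ L)⁻¹ * Δ = -((lam ^ L)⁻¹ * (Δ - lam ^ L * d L)) := by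
    field_simp
    ring
  rw [hgoal_eq, abs_neg, abs_mul, abs_inv, abs_pow, abs_of_pos hl0]
  have hb2 : (lam ^ L)⁻¹ * |Δ - lam ^ L * d L| ≤ (lam ^ L)⁻¹ * (K * lam ^ (L + 1)) :=
    mul_le_mul_of_nonneg_left herr (by positivity)
  have hb3 : (lam ^ L)⁻¹ * (K * lam ^ (L + 1)) = K * lam := by
    rw [pow_succ]
    field_simp
  rw [hb3] at hb2
  nlinarith
end

section
/- Let a ∈ ℝ. With y₃ = a and y₄ = y₅ = ⋯ = y_N = 0, for every even integer N ≥ 4 one has W̃_N[a, 0, …, 0] = 0 in A. -/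
/-- Let `A` be a commutative ℝ-algebra, `Γ : A → A` ℝ-linear and `w ∈ A`.  Suppose
`W, W̃ : ℕ → (ℕ → ℝ) → A` satisfy the defining relations of the paper:
`W̃₃[y] = y₃ w³`, `W̃₄[y] = y₄ w⁴`, and for `N ≥ 5`
`W_N[y] = ∑_{k=1}^{k_N} (N!/k!) ∑_{(N₀,…,N_k)} (y_{N₀+k}/N₀!) w^{N₀} ∏_ℓ Γ(W̃_{N_ℓ}[y])/N_ℓ!`
(the inner sum over nonnegative tuples with `N₀+⋯+N_k = N`, `N₀ ≥ max(3−k,0)`,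
`N_ℓ ≥ 3`), and `W̃_N[y] = y_N w^N + W_N[y]`, where `k_N = min(⌊(N−3)/2⌋, ⌊N/3⌋)`.
Then, taking `y₃ = a` and all other `y_n = 0`, for every even `N ≥ 4` one has
`W̃_N[a,0,…,0] = 0`. -/
theorem Wtilde_vanishes_at_even_indices
    {A : Type*} [CommRing A] [Algebra ℝ A] (Γ : A →ₗ[ℝ] A) (w : A)
    (W Wt : ℕ → (ℕ → ℝ) → A)
    (hWt3 : ∀ y : ℕ → ℝ, Wt 3 y = y 3 • w ^ 3)
    (hWt4 : ∀ y : ℕ → ℝ, Wt 4 y = y 4 • w ^ 4)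
    (hW : ∀ N : ℕ, 5 ≤ N → ∀ y : ℕ → ℝ, W N y =
      ∑ k ∈ Finset.Icc 1 (min ((N - 3) / 2) (N / 3)),
        ((N.factorial : ℝ) / (k.factorial : ℝ)) •
          ∑ ν ∈ (Finset.Nat.antidiagonalTuple (k + 1) N).filter
              (fun ν => 3 - k ≤ ν 0 ∧ ∀ ℓ : Fin k, 3 ≤ ν ℓ.succ),
            (y (ν 0 + k) / ((ν 0).factorial : ℝ)) • w ^ (ν 0) *
              ∏ ℓ : Fin k, (((ν ℓ.succ).factorial : ℝ))⁻¹ • Γ (Wt (ν ℓ.succ) y))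
    (hWt : ∀ N : ℕ, 5 ≤ N → ∀ y : ℕ → ℝ, Wt N y = y N • w ^ N + W N y)
    (a : ℝ) :
    ∀ N : ℕ, 4 ≤ N → Even N →
      Wt N (fun n => if n = 3 then a else 0) = 0 := by

  intro N
  induction N using Nat.strong_induction_on with
  | _ N ih =>
  intro hN4 hNe
  set y : ℕ → ℝ := fun n => if n = 3 then a else 0 with hy
  rcases eq_or_lt_of_le hN4 with h4 | h5
  · rw [← h4, hWt4]
    simp [hy]
  · have h5 : 5 ≤ N := h5
    have hyN : y N = 0 := by
      simp only [hy]
      rw [if_neg (by omega)]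
    rw [hWt N h5, hW N h5, hyN, zero_smul, zero_add]
    apply Finset.sum_eq_zero
    intro k hk
    rw [Finset.sum_eq_zero, smul_zero]
    intro ν hν
    simp only [Finset.mem_filter] at hν
    obtain ⟨hmem, hν0, hν3⟩ := hν
    rw [Finset.Nat.mem_antidiagonalTuple] at hmem
    have hk1 : 1 ≤ k := (Finset.mem_Icc.mp hk).1
    by_cases hc : ν 0 + k = 3
    · have hsum : ν 0 + ∑ ℓ : Fin k, ν ℓ.succ = N := by
        rw [← hmem, Fin.sum_univ_succ]
      by_cases hall : ∀ ℓ : Fin k, Odd (ν ℓ.succ)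
      · exfalso
        have heven : Even (∑ ℓ : Fin k, (ν ℓ.succ + 1)) := by
          apply Finset.even_sum
          exact fun ℓ _ => (hall ℓ).add_one
        rw [Finset.sum_add_distrib, Finset.sum_const, Finset.card_univ,
          Fintype.card_fin, smul_eq_mul, mul_one] at heven
        obtain ⟨m, hm⟩ := heven
        obtain ⟨n, hn⟩ := hNe
        omega
      · push_neg at hall
        obtain ⟨ℓ, hℓ⟩ := hall
        rw [Nat.not_odd_iff_even] at hℓ
        have h3ℓ : 3 ≤ ν ℓ.succ := hν3 ℓ
        have hsplit : ν ℓ.succ + ∑ ℓ' ∈ Finset.univ.erase ℓ, ν ℓ'.succ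
            = ∑ ℓ' : Fin k, ν ℓ'.succ := Finset.add_sum_erase _ (fun ℓ' => ν ℓ'.succ) (Finset.mem_univ ℓ)
        have hrest : 3 * (k - 1) ≤ ∑ ℓ' ∈ Finset.univ.erase ℓ, ν ℓ'.succ := by
          calc 3 * (k - 1) = ∑ _ℓ' ∈ Finset.univ.erase ℓ, 3 := by
                rw [Finset.sum_const, Finset.card_erase_of_mem (Finset.mem_univ ℓ),
                  Finset.card_univ, Fintype.card_fin, smul_eq_mul, mul_comm]
            _ ≤ _ := Finset.sum_le_sum (fun ℓ' _ => hν3 ℓ')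
        have hlt : ν ℓ.succ < N := by omega
        have h4ℓ : 4 ≤ ν ℓ.succ := by
          obtain ⟨m, hm⟩ := hℓ; omega
        have := ih (ν ℓ.succ) hlt h4ℓ hℓ
        rw [Finset.prod_eq_zero (Finset.mem_univ ℓ), mul_zero]
        rw [this, map_zero, smul_zero]
    · have : y (ν 0 + k) = 0 := by
        simp only [hy]; rw [if_neg hc]
      rw [this, zero_div, zero_smul, zero_mul]
end

section
/- Let a ∈ ℝ. With y₃ = a and y₄ = y₅ = ⋯ = 0, for every integer n ≥ 0 one has W̃_{2n+3}[a, 0, …, 0] = a^{n+1}·𝒲_{2n+3} in A. -/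
private lemma prod_smul_real' {A : Type*} [CommRing A] [Algebra ℝ A] {ι : Type*} (s : Finset ι)
    (b : ι → ℝ) (f : ι → A) :
    ∏ i ∈ s, b i • f i = (∏ i ∈ s, b i) • ∏ i ∈ s, f i := by
  induction s using Finset.cons_induction_on with
  | empty => simp
  | cons _ _ hj ih =>
    rw [Finset.prod_cons, Finset.prod_cons, Finset.prod_cons, ih, smul_mul_smul_comm]

/-- Let `A` be a commutative ℝ-algebra, `Γ : A → A` ℝ-linear and `w ∈ A`.  Suppose
`W, W̃ : ℕ → (ℕ → ℝ) → A` satisfy the recurrences of the paper (with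
`k_N = min(⌊(N−3)/2⌋, ⌊N/3⌋)`), and `𝒲 : ℕ → A` (indexed by odd numbers `2n+3`)
satisfies `𝒲₃ = w³` and, for `n ≥ 1`,
`𝒲_{2n+3} = ∑_{k=1}^{min(n,3)} ((2n+3)!/(k!(3−k)!)) ∑_{n₁+⋯+n_k = n−k}
  w^{3−k} ∏_ℓ Γ(𝒲_{2n_ℓ+3})/(2n_ℓ+3)!`.
Then, with `y₃ = a` and all other `y_n = 0`, for every `n ≥ 0`:
`W̃_{2n+3}[a,0,…,0] = a^{n+1} 𝒲_{2n+3}`. -/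
theorem Wtilde_at_odd_indices_eq_pow_smul_calW
    {A : Type*} [CommRing A] [Algebra ℝ A] (Γ : A →ₗ[ℝ] A) (w : A)
    (W Wt : ℕ → (ℕ → ℝ) → A) (calW : ℕ → A)
    (hWt3 : ∀ y : ℕ → ℝ, Wt 3 y = y 3 • w ^ 3)
    (hWt4 : ∀ y : ℕ → ℝ, Wt 4 y = y 4 • w ^ 4)
    (hW : ∀ N : ℕ, 5 ≤ N → ∀ y : ℕ → ℝ, W N y =
      ∑ k ∈ Finset.Icc 1 (min ((N - 3) / 2) (N / 3)),
        ((N.factorial : ℝ) / (k.factorial : ℝ)) •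
          ∑ ν ∈ (Finset.Nat.antidiagonalTuple (k + 1) N).filter
              (fun ν => 3 - k ≤ ν 0 ∧ ∀ ℓ : Fin k, 3 ≤ ν ℓ.succ),
            (y (ν 0 + k) / ((ν 0).factorial : ℝ)) • w ^ (ν 0) *
              ∏ ℓ : Fin k, (((ν ℓ.succ).factorial : ℝ))⁻¹ • Γ (Wt (ν ℓ.succ) y))
    (hWt : ∀ N : ℕ, 5 ≤ N → ∀ y : ℕ → ℝ, Wt N y = y N • w ^ N + W N y)
    (hcal3 : calW 3 = w ^ 3)
    (hcal : ∀ n : ℕ, 1 ≤ n → calW (2 * n + 3) =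
      ∑ k ∈ Finset.Icc 1 (min n 3),
        (((2 * n + 3).factorial : ℝ) / ((k.factorial * (3 - k).factorial : ℕ) : ℝ)) •
          ∑ ν ∈ Finset.Nat.antidiagonalTuple k (n - k),
            w ^ (3 - k) *
              ∏ ℓ : Fin k, (((2 * ν ℓ + 3).factorial : ℝ))⁻¹ • Γ (calW (2 * ν ℓ + 3)))
    (a : ℝ) :
    ∀ n : ℕ,
      Wt (2 * n + 3) (fun m => if m = 3 then a else 0) = a ^ (n + 1) • calW (2 * n + 3) := by
  intro n
  set y : ℕ → ℝ := fun m => if m = 3 then a else 0 with hy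
  suffices H : ∀ m : ℕ, 3 ≤ m → Wt m y = if Odd m then a ^ ((m - 1) / 2) • calW m else 0 by
    have h := H (2 * n + 3) (by omega)
    rw [if_pos ⟨n + 1, by ring⟩] at h
    rw [h]
    congr 2
    omega
  intro m
  induction m using Nat.strong_induction_on with
  | _ m IH =>
  intro hm3
  -- helper: shape of a sum of odd entries ≥ 3
  have hshape : ∀ (k : ℕ) (ν : Fin (k + 1) → ℕ), (∀ ℓ : Fin k, 3 ≤ ν ℓ.succ) →
      (∀ ℓ : Fin k, Odd (ν ℓ.succ)) → ∀ ℓ : Fin k, ν ℓ.succ = 2 * ((ν ℓ.succ - 3) / 2) + 3 := by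
    intro k ν h3 hodd ℓ
    obtain ⟨t, ht⟩ := hodd ℓ
    have := h3 ℓ
    omega
  have hsum_shape : ∀ (k : ℕ) (ν : Fin (k + 1) → ℕ), (∀ ℓ : Fin k, 3 ≤ ν ℓ.succ) →
      (∀ ℓ : Fin k, Odd (ν ℓ.succ)) →
      ∑ ℓ : Fin k, ν ℓ.succ = 2 * (∑ ℓ : Fin k, (ν ℓ.succ - 3) / 2) + 3 * k := by
    intro k ν h3 hodd
    calc ∑ ℓ : Fin k, ν ℓ.succ = ∑ ℓ : Fin k, (2 * ((ν ℓ.succ - 3) / 2) + 3) :=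
          Finset.sum_congr rfl fun ℓ _ => hshape k ν h3 hodd ℓ
      _ = 2 * (∑ ℓ : Fin k, (ν ℓ.succ - 3) / 2) + 3 * k := by
          rw [Finset.sum_add_distrib, ← Finset.mul_sum]
          simp [mul_comm]
  have hsplit : ∀ (k : ℕ) (ν : Fin (k + 1) → ℕ),
      ν ∈ Finset.Nat.antidiagonalTuple (k + 1) m →
      ν 0 + ∑ ℓ : Fin k, ν ℓ.succ = m := by
    intro k ν hν
    have := Finset.Nat.mem_antidiagonalTuple.mp hν
    rw [Fin.sum_univ_succ] at this
    exact this
  have hbound : ∀ (k : ℕ) (ν : Fin (k + 1) → ℕ), 1 ≤ k →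
      ν ∈ Finset.Nat.antidiagonalTuple (k + 1) m →
      (∀ ℓ : Fin k, 3 ≤ ν ℓ.succ) → ν 0 + k = 3 → ∀ ℓ : Fin k, ν ℓ.succ < m := by
    intro k ν hk hν h3 h0 ℓ
    have hs := hsplit k ν hν
    have herase : ν ℓ.succ + ∑ j ∈ Finset.univ.erase ℓ, ν j.succ = ∑ j : Fin k, ν j.succ :=
      Finset.add_sum_erase Finset.univ (fun j => ν j.succ) (Finset.mem_univ ℓ)
    have hcard : (Finset.univ.erase ℓ).card = k - 1 := by
      simp [Finset.card_erase_of_mem]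
    have hlow : (k - 1) * 3 ≤ ∑ j ∈ Finset.univ.erase ℓ, ν j.succ := by
      have := Finset.card_nsmul_le_sum (Finset.univ.erase ℓ) (fun j => ν j.succ) 3
        (fun j _ => h3 j)
      rwa [hcard, smul_eq_mul] at this
    omega
  -- zero lemmas for terms
  have hA : ∀ (k : ℕ) (ν : Fin (k + 1) → ℕ), ν 0 + k ≠ 3 →
      (y (ν 0 + k) / ((ν 0).factorial : ℝ)) • w ^ (ν 0) *
        ∏ ℓ : Fin k, (((ν ℓ.succ).factorial : ℝ))⁻¹ • Γ (Wt (ν ℓ.succ) y) = 0 := by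
    intro k ν h
    have hy0 : y (ν 0 + k) = 0 := by rw [hy]; simp [h]
    rw [hy0, zero_div, zero_smul, zero_mul]
  have hB : ∀ (k : ℕ) (ν : Fin (k + 1) → ℕ) (ℓ0 : Fin k), Wt (ν ℓ0.succ) y = 0 →
      (y (ν 0 + k) / ((ν 0).factorial : ℝ)) • w ^ (ν 0) *
        ∏ ℓ : Fin k, (((ν ℓ.succ).factorial : ℝ))⁻¹ • Γ (Wt (ν ℓ.succ) y) = 0 := by
    intro k ν ℓ0 h0
    apply mul_eq_zero_of_right
    apply Finset.prod_eq_zero (Finset.mem_univ ℓ0)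
    rw [h0, map_zero, smul_zero]
  rcases eq_or_ne m 3 with rfl | hne3
  · rw [hWt3, if_pos (by decide : Odd 3), hcal3, hy]
    norm_num
  rcases eq_or_ne m 4 with rfl | hne4
  · rw [hWt4, if_neg (by decide : ¬ Odd 4), hy]
    norm_num
  have hm5 : 5 ≤ m := by omega
  have hym : y m = 0 := by rw [hy]; simp [hne3]
  rw [hWt m hm5 y, hW m hm5 y, hym, zero_smul, zero_add]
  rcases Nat.even_or_odd m with hev | hodd
  · -- even case : everything vanishes
    rw [if_neg (by rw [Nat.not_odd_iff_even]; exact hev)]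
    apply Finset.sum_eq_zero
    intro k hk
    rw [Finset.sum_eq_zero, smul_zero]
    intro ν hν
    rw [Finset.mem_filter] at hν
    obtain ⟨hmem, hge0, hge3⟩ := hν
    by_cases h3 : ν 0 + k = 3
    · by_cases hoddall : ∀ ℓ : Fin k, Odd (ν ℓ.succ)
      · exfalso
        have hs := hsplit k ν hmem
        have ht := hsum_shape k ν hge3 hoddall
        obtain ⟨r, hr⟩ := hev
        have hk1 : 1 ≤ k := (Finset.mem_Icc.mp hk).1
        omega
      · push_neg at hoddall
        obtain ⟨ℓ0, hℓ0⟩ := hoddall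
        have hk1 : 1 ≤ k := (Finset.mem_Icc.mp hk).1
        have hlt := hbound k ν hk1 hmem hge3 h3 ℓ0
        have h0 : Wt (ν ℓ0.succ) y = 0 := by
          rw [IH _ hlt (hge3 ℓ0), if_neg hℓ0]
        exact hB k ν ℓ0 h0
    · exact hA k ν h3
  · -- odd case
    obtain ⟨n', rfl⟩ : ∃ n', m = 2 * n' + 3 := by
      obtain ⟨t, ht⟩ := hodd
      exact ⟨(m - 3) / 2, by omega⟩
    have hn'1 : 1 ≤ n' := by omega
    rw [if_pos hodd]
    have hexp : (2 * n' + 3 - 1) / 2 = n' + 1 := by omega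
    rw [hexp, hcal n' hn'1, Finset.smul_sum]
    have hsub : Finset.Icc 1 (min n' 3) ⊆ Finset.Icc 1 (min ((2 * n' + 3 - 3) / 2) ((2 * n' + 3) / 3)) := by
      intro x hx
      rw [Finset.mem_Icc] at hx ⊢
      omega
    rw [← Finset.sum_subset hsub ?hvan]
    case hvan =>
      intro k hk hk'
      rw [Finset.mem_Icc] at hk
      rw [Finset.mem_Icc] at hk'
      have hk4 : 4 ≤ k := by omega
      rw [Finset.sum_eq_zero, smul_zero]
      intro ν hν
      exact hA k ν (by omega)
    apply Finset.sum_congr rfl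
    intro k hk
    rw [Finset.mem_Icc] at hk
    have hk1 : 1 ≤ k := hk.1
    have hk3 : k ≤ 3 := le_trans hk.2 (min_le_right _ _)
    have hkn : k ≤ n' := le_trans hk.2 (min_le_left _ _)
    -- key : the inner sum equals a scalar multiple of the calW inner sum
    have key : (∑ ν ∈ (Finset.Nat.antidiagonalTuple (k + 1) (2 * n' + 3)).filter
            (fun ν => 3 - k ≤ ν 0 ∧ ∀ ℓ : Fin k, 3 ≤ ν ℓ.succ),
          (y (ν 0 + k) / ((ν 0).factorial : ℝ)) • w ^ (ν 0) *
            ∏ ℓ : Fin k, (((ν ℓ.succ).factorial : ℝ))⁻¹ • Γ (Wt (ν ℓ.succ) y))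
        = (a ^ (n' + 1) / (((3 - k).factorial : ℕ) : ℝ)) •
          ∑ μ ∈ Finset.Nat.antidiagonalTuple k (n' - k),
            w ^ (3 - k) *
              ∏ ℓ : Fin k, (((2 * μ ℓ + 3).factorial : ℝ))⁻¹ • Γ (calW (2 * μ ℓ + 3)) := by
      classical
      rw [Finset.smul_sum]
      rw [← Finset.sum_filter_of_ne (p := fun ν : Fin (k+1) → ℕ =>
            ν 0 + k = 3 ∧ ∀ ℓ : Fin k, Odd (ν ℓ.succ)) ?hp]
      case hp =>
        intro ν hν hne
        rw [Finset.mem_filter] at hν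
        obtain ⟨hmem, hge0, hge3⟩ := hν
        have h3 : ν 0 + k = 3 := by
          by_contra h
          exact hne (hA k ν h)
        refine ⟨h3, ?_⟩
        intro ℓ
        by_contra hev
        have hlt := hbound k ν hk1 hmem hge3 h3 ℓ
        have h0 : Wt (ν ℓ.succ) y = 0 := by
          rw [IH _ hlt (hge3 ℓ), if_neg hev]
        exact hne (hB k ν ℓ h0)
      refine Finset.sum_nbij' (fun ν ℓ => (ν ℓ.succ - 3) / 2)
        (fun μ => Fin.cons (3 - k) (fun ℓ => 2 * μ ℓ + 3)) ?_ ?_ ?_ ?_ ?_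
      · -- forward membership
        intro ν hν
        rw [Finset.mem_filter, Finset.mem_filter] at hν
        obtain ⟨⟨hmem, hge0, hge3⟩, h3, hoddν⟩ := hν
        rw [Finset.Nat.mem_antidiagonalTuple]
        show ∑ ℓ : Fin k, (ν ℓ.succ - 3) / 2 = n' - k
        have hs := hsplit k ν hmem
        have ht := hsum_shape k ν hge3 hoddν
        omega
      · -- backward membership
        intro μ hμ
        rw [Finset.Nat.mem_antidiagonalTuple] at hμ
        rw [Finset.mem_filter, Finset.mem_filter]
        have hsum : ∑ i : Fin (k + 1), Fin.cons (3 - k) (fun ℓ => 2 * μ ℓ + 3) i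
            = 2 * n' + 3 := by
          rw [Fin.sum_univ_succ]
          simp only [Fin.cons_zero, Fin.cons_succ]
          have : ∑ ℓ : Fin k, (2 * μ ℓ + 3) = 2 * (∑ ℓ : Fin k, μ ℓ) + 3 * k := by
            rw [Finset.sum_add_distrib, ← Finset.mul_sum]
            simp [mul_comm]
          omega
        refine ⟨⟨Finset.Nat.mem_antidiagonalTuple.mpr hsum, ?_, ?_⟩, ?_, ?_⟩
        · simp
        · intro ℓ; simp [Fin.cons_succ]
        · simp only [Fin.cons_zero]; omega
        · intro ℓ; simp only [Fin.cons_succ]; exact ⟨μ ℓ + 1, by ring⟩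
      · -- left inverse
        intro ν hν
        rw [Finset.mem_filter, Finset.mem_filter] at hν
        obtain ⟨⟨hmem, hge0, hge3⟩, h3, hoddν⟩ := hν
        funext i
        refine Fin.cases ?_ ?_ i
        · simp only [Fin.cons_zero]; omega
        · intro ℓ
          simp only [Fin.cons_succ]
          exact (hshape k ν hge3 hoddν ℓ).symm
      · -- right inverse
        intro μ hμ
        funext ℓ
        simp only [Fin.cons_succ]
        omega
      · -- term equality
        intro ν hν
        rw [Finset.mem_filter, Finset.mem_filter] at hν
        obtain ⟨⟨hmem, hge0, hge3⟩, h3, hoddν⟩ := hν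
        have h0 : ν 0 = 3 - k := by omega
        have hsh := hshape k ν hge3 hoddν
        have hs := hsplit k ν hmem
        have ht := hsum_shape k ν hge3 hoddν
        have hmu : ∑ ℓ : Fin k, (ν ℓ.succ - 3) / 2 = n' - k := by omega
        -- rewrite the Wt's using the induction hypothesis
        have hWtν : ∀ ℓ : Fin k, Wt (ν ℓ.succ) y
            = a ^ ((ν ℓ.succ - 3) / 2 + 1) • calW (ν ℓ.succ) := by
          intro ℓ
          have hlt := hbound k ν hk1 hmem hge3 h3 ℓ
          rw [IH _ hlt (hge3 ℓ), if_pos (hoddν ℓ)]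
          congr 2
          have := hge3 ℓ
          obtain ⟨t, ht'⟩ := hoddν ℓ
          omega
        have hprod : ∏ ℓ : Fin k, (((ν ℓ.succ).factorial : ℝ))⁻¹ • Γ (Wt (ν ℓ.succ) y)
            = ((∏ ℓ : Fin k, (((ν ℓ.succ).factorial : ℝ))⁻¹) * a ^ n') •
              ∏ ℓ : Fin k, Γ (calW (ν ℓ.succ)) := by
          calc ∏ ℓ : Fin k, (((ν ℓ.succ).factorial : ℝ))⁻¹ • Γ (Wt (ν ℓ.succ) y)
              = ∏ ℓ : Fin k, (((((ν ℓ.succ).factorial : ℝ))⁻¹ * a ^ ((ν ℓ.succ - 3) / 2 + 1)) •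
                  Γ (calW (ν ℓ.succ))) := by
                refine Finset.prod_congr rfl fun ℓ _ => ?_
                rw [hWtν ℓ, map_smul, smul_smul]
            _ = (∏ ℓ : Fin k, ((((ν ℓ.succ).factorial : ℝ))⁻¹ * a ^ ((ν ℓ.succ - 3) / 2 + 1))) •
                  ∏ ℓ : Fin k, Γ (calW (ν ℓ.succ)) := prod_smul_real' _ _ _
            _ = _ := by
                have hexp2 : ∑ ℓ : Fin k, ((ν ℓ.succ - 3) / 2 + 1) = n' := by
                  rw [Finset.sum_add_distrib, hmu]
                  simp only [Finset.sum_const, Finset.card_univ, Fintype.card_fin, smul_eq_mul,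
                    mul_one]
                  omega
                rw [Finset.prod_mul_distrib, Finset.prod_pow_eq_pow_sum, hexp2]
        -- now both sides
        have hgoalprod : ∏ ℓ : Fin k,
            (((2 * ((ν ℓ.succ - 3) / 2) + 3).factorial : ℝ))⁻¹ • Γ (calW (2 * ((ν ℓ.succ - 3) / 2) + 3))
            = (∏ ℓ : Fin k, (((ν ℓ.succ).factorial : ℝ))⁻¹) • ∏ ℓ : Fin k, Γ (calW (ν ℓ.succ)) := by
          rw [show (fun ℓ : Fin k => (((2 * ((ν ℓ.succ - 3) / 2) + 3).factorial : ℝ))⁻¹ •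
              Γ (calW (2 * ((ν ℓ.succ - 3) / 2) + 3)))
            = fun ℓ : Fin k => (((ν ℓ.succ).factorial : ℝ))⁻¹ • Γ (calW (ν ℓ.succ)) from
              funext fun ℓ => by rw [← hsh ℓ]]
          exact prod_smul_real' _ _ _
        rw [hprod, hgoalprod, h0]
        have h03 : 3 - k + k = 3 := by omega
        rw [h03, hy]
        simp only [reduceIte, smul_mul_assoc, mul_smul_comm, smul_smul]
        congr 1
        ring
    rw [key, smul_smul, smul_smul]
    congr 1
    have h1 : ((k.factorial : ℕ) : ℝ) ≠ 0 := Nat.cast_ne_zero.mpr (Nat.factorial_ne_zero _)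
    have h2 : (((3 - k).factorial : ℕ) : ℝ) ≠ 0 := Nat.cast_ne_zero.mpr (Nat.factorial_ne_zero _)
    push_cast
    field_simp
end
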